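/- If a step t →βi u occurs in the fireball calculus then t ≠ u (inert steps are never identity steps). -/
import Mathlib


/-- λ-terms in de Bruijn notation: variables, abstractions, applications. -/
inductive Tm : Type
  | var : Nat → Tm
  | lam : Tm → Tm
  | app : Tm → Tm → Tm

namespace Tm

/-- Shift (by one) the free de Bruijn indices `≥ k`. -/
def shift (k : Nat) : Tm → Tm
  | var n => if k ≤ n then var (n+1) else var n
  | lam t => lam (shift (k+1) t)
  | app t u => app (shift k t) (shift k u)

/-- Capture-avoiding substitution of `u` for the free variable `k` in a term. -/
def subst : Tm → Nat → Tm → Tm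
  | var n, k, u => if n = k then u else if k < n then var (n-1) else var n
  | lam t, k, u => lam (subst t (k+1) (shift 0 u))
  | app t s, k, u => app (subst t k u) (subst s k u)

/-- Values: variables and abstractions. -/
inductive IsValue : Tm → Prop
  | var : IsValue (var n)
  | lam : IsValue (lam t)

end Tm
open Tm

mutual
/-- Inert terms: `i ::= x | i f`. -/
inductive Inert : Tm → Prop
  | var : Inert (.var n)
  | app : Inert i → Fireball f → Inert (.app i f)
/-- Fireballs: `f ::= λx.t | i`. -/
inductive Fireball : Tm → Prop
  | lam : Fireball (.lam t)
  | inert : Inert i → Fireball i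
end

/-- Abstraction steps: root rule `(λx.t)(λy.u) ↦ t[x:=λy.u]`, weak closure. -/
inductive StepBL : Tm → Tm → Prop
  | beta : StepBL (.app (.lam t) (.lam u)) (subst t 0 (.lam u))
  | appL : StepBL t t' → StepBL (.app t u) (.app t' u)
  | appR : StepBL u u' → StepBL (.app t u) (.app t u')

/-- Inert steps: root rule `(λx.t)i ↦ t[x:=i]` with `i` inert, weak closure. -/
inductive StepBI : Tm → Tm → Prop
  | beta : Inert i → StepBI (.app (.lam t) i) (subst t 0 i)
  | appL : StepBI t t' → StepBI (.app t u) (.app t' u)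
  | appR : StepBI u u' → StepBI (.app t u) (.app t u')

/-- The fireball reduction `→βf = →βλ ∪ →βi`. -/
def StepBF (t u : Tm) : Prop := StepBL t u ∨ StepBI t u

mutual
theorem inert_shift : ∀ {t : Tm}, Inert t → ∀ k, Inert (shift k t)
  | _, .var, _ => by simp only [shift]; split <;> exact .var
  | _, .app hi hf, k => .app (inert_shift hi k) (fireball_shift hf k)
termination_by t _ _ => (sizeOf t, 0)
theorem fireball_shift : ∀ {t : Tm}, Fireball t → ∀ k, Fireball (shift k t)
  | _, .lam, _ => .lam
  | _, .inert hi, k => .inert (inert_shift hi k)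
termination_by t _ _ => (sizeOf t, 1)
end

theorem inert_not_lam {s : Tm} (h : Inert (.lam s)) : False := by cases h

theorem inert_not_applam {s w : Tm} (h : Inert (.app (.lam s) w)) : False := by
  cases h with
  | app hi _ => exact inert_not_lam hi

theorem key : ∀ (t : Tm) (k : Nat) (u w : Tm), Inert u → subst t k u ≠ .app (.lam t) w
  | .var n, k, u, w, hu => by
      simp only [subst]
      split
      · intro h; rw [h] at hu; exact inert_not_applam hu
      · split <;> simp
  | .lam s, k, u, w, hu => by simp [subst]
  | .app (.var n) t2, k, u, w, hu => by
      intro h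
      simp only [subst] at h
      injection h with h1 h2
      split_ifs at h1
      · rw [h1] at hu; exact inert_not_lam hu
  | .app (.lam s) t2, k, u, w, hu => by
      intro h
      simp only [subst] at h
      injection h with h1 h2
      injection h1 with h1
      exact key s (k+1) (shift 0 u) t2 (inert_shift hu 0) h1
  | .app (.app a b) t2, k, u, w, hu => by
      simp [subst]

/-- inert steps are never identity steps. -/
theorem betai_step_neq (t u : Tm) (h : StepBI t u) : t ≠ u := by
  induction h with
  | beta hi => exact fun h => key _ 0 _ _ hi h.symm
  | appL _ ih => intro h; injection h with h1 h2; exact ih h1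
  | appR _ ih => intro h; injection h with h1 h2; exact ih h2
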